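/- Let N : ℕ, let ℏ > 0 and Δt > 0 be real numbers, let H : Matrix (Fin N) (Fin N) ℝ be symmetric (Hᵀ = H), and let V := Matrix.diagonal d with d : Fin N → ℝ satisfying d i > 0 for all i. Define the block matrix 𝒫 := Matrix.fromBlocks V (-(Δt/(2*ℏ)) • H) (-(Δt/(2*ℏ)) • H) V, indexed by Fin N ⊕ Fin N, and the symmetric matrix Σ := (1/ℏ) • (D * H * D), where D := Matrix.diagonal (fun i => 1/Real.sqrt (d i)). Then 𝒫 is positive definite if and only if every eigenvalue μ ∈ spectrum ℝ Σ satisfies Δt * |μ| < 2. -/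

import Mathlib

/-!
Congruence by `[[1, 1], [1, -1]]` splits `fromBlocks V B B V` into the blocks `V + B` and `V - B`,
and congruence by `V^{-1/2}` turns `V ∓ (Δt / 2ℏ) H` into `1 ∓ (Δt / 2) Σ`. By the spectral
theorem the latter is positive definite iff `1 ∓ (Δt / 2) μ > 0` for every eigenvalue `μ` of `Σ`,
and both signs together say `Δt |μ| < 2`.
-/

open Matrix
open scoped MatrixOrder ComplexOrder

namespace Matrix

variable {m n 𝕜 : Type*} [RCLike 𝕜]

theorem posDef_smul_iff {X : Matrix m m 𝕜} {c : ℝ} (hc : 0 < c) : (c • X).PosDef ↔ X.PosDef :=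
  ⟨fun h => by simpa [smul_smul, hc.ne'] using h.smul (inv_pos.mpr hc), fun h => h.smul hc⟩

variable [Fintype m] [Fintype n]

theorem posDef_fromBlocks_zero_iff {A : Matrix m m 𝕜} {D : Matrix n n 𝕜} :
    (fromBlocks A 0 0 D).PosDef ↔ A.PosDef ∧ D.PosDef := by
  refine ⟨fun h => ⟨h.submatrix Sum.inl_injective, h.submatrix Sum.inr_injective⟩,
    fun ⟨hA, hD⟩ => ?_⟩
  refine .of_dotProduct_mulVec_pos (hA.isHermitian.fromBlocks (by simp) hD.isHermitian)
    fun z hz => ?_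
  obtain ⟨x, y, rfl⟩ : ∃ x y, z = Sum.elim x y :=
    ⟨z ∘ Sum.inl, z ∘ Sum.inr, (Sum.elim_comp_inl_inr z).symm⟩
  have hxy : x ≠ 0 ∨ y ≠ 0 := by
    by_contra! h
    exact hz (by simp [h.1, h.2])
  simp only [fromBlocks_mulVec, zero_mulVec, add_zero, zero_add, Function.star_sumElim,
    sumElim_dotProduct_sumElim]
  rcases hxy with hx | hy
  · exact add_pos_of_pos_of_nonneg (hA.dotProduct_mulVec_pos hx)
      (hD.posSemidef.dotProduct_mulVec_nonneg y)
  · exact add_pos_of_nonneg_of_pos (hA.posSemidef.dotProduct_mulVec_nonneg x)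
      (hD.dotProduct_mulVec_pos hy)

variable [DecidableEq m]

theorem posDef_fromBlocks_self_iff {A B : Matrix m m 𝕜} :
    (fromBlocks A B B A).PosDef ↔ (A + B).PosDef ∧ (A - B).PosDef := by
  let T : Matrix (m ⊕ m) (m ⊕ m) 𝕜 := fromBlocks 1 1 1 (-1)
  have hT : star T = T := by simp [T, star_eq_conjTranspose, fromBlocks_conjTranspose]
  have hTT : T * T = (2 : 𝕜) • 1 := by
    simp only [T, fromBlocks_multiply, ← fromBlocks_one, fromBlocks_smul]
    congr 1 <;> simp <;> module
  have hTunit : IsUnit T := IsUnit.of_mul_eq_one ((2 : 𝕜)⁻¹ • T) (by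
    rw [mul_smul_comm, hTT, smul_smul, inv_mul_cancel₀ two_ne_zero, one_smul])
  have hconj : star T * fromBlocks A B B A * T =
      fromBlocks ((2 : ℝ) • (A + B)) 0 0 ((2 : ℝ) • (A - B)) := by
    simp only [hT, T, fromBlocks_multiply]
    congr 1 <;> simp <;> module
  rw [← hTunit.posDef_star_left_conjugate_iff, hconj, posDef_fromBlocks_zero_iff,
    posDef_smul_iff two_pos, posDef_smul_iff two_pos]

theorem IsHermitian.posDef_one_add_smul_iff {S : Matrix m m 𝕜} (hS : S.IsHermitian) (c : ℝ) :
    (1 + c • S).PosDef ↔ ∀ μ ∈ spectrum ℝ S, 0 < 1 + c * μ := by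
  have hcfc : cfc (fun μ => 1 + c * μ) S = 1 + c • S := by
    rw [cfc_const_add 1 (fun μ => c * μ) S, cfc_const_mul_id c S hS.isSelfAdjoint, map_one]
  rw [← isStrictlyPositive_iff_posDef, ← hcfc, cfc_isStrictlyPositive_iff _ S]

theorem posDef_diagonal_add_iff {d : m → ℝ} (hd : ∀ i, 0 < d i) (X : Matrix m m ℝ) :
    (diagonal d + X).PosDef ↔
      (1 + diagonal (fun i => 1 / √(d i)) * X * diagonal (fun i => 1 / √(d i))).PosDef := by
  set D := diagonal (fun i => 1 / √(d i))
  have hD : IsUnit D := isUnit_diagonal.mpr <| Pi.isUnit_iff.mpr fun i =>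
    (one_div_pos.mpr (Real.sqrt_pos.mpr (hd i))).ne'.isUnit
  have hDd : D * diagonal d * D = 1 := by
    rw [diagonal_mul_diagonal, diagonal_mul_diagonal, ← diagonal_one]
    congr 1
    ext i
    have := Real.sq_sqrt (hd i).le
    field_simp
    rw [this, div_self (hd i).ne']
  rw [← hD.posDef_star_left_conjugate_iff, star_eq_conjTranspose, diagonal_conjTranspose,
    star_trivial, mul_add, add_mul, hDd]

end Matrix

theorem fdtdq_posdef_iff_generalized_CFL
    (N : ℕ) (ℏ Δt : ℝ) (hΔt : 0 < Δt)
    (H : Matrix (Fin N) (Fin N) ℝ) (hH : Hᵀ = H)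
    (d : Fin N → ℝ) (hd : ∀ i, 0 < d i) :
    (Matrix.fromBlocks (Matrix.diagonal d) (-(Δt/(2*ℏ)) • H)
        (-(Δt/(2*ℏ)) • H) (Matrix.diagonal d)).PosDef
      ↔ ∀ μ ∈ spectrum ℝ
          ((1/ℏ) • (Matrix.diagonal (fun i => 1 / Real.sqrt (d i)) * H
            * Matrix.diagonal (fun i => 1 / Real.sqrt (d i)))),
          Δt * |μ| < 2 := by
  set D := diagonal (fun i => 1 / √(d i))
  set S := (1 / ℏ) • (D * H * D)
  have hS : S.IsHermitian := by
    have hD : Dᴴ = D := by simp [D]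
    have hDHD := isHermitian_conjTranspose_mul_mul D
      (show H.IsHermitian by rwa [IsHermitian, conjTranspose_eq_transpose_of_trivial])
    rw [hD] at hDHD
    exact hDHD.smul (.all _)
  have hscale (s : ℝ) : D * ((s / (2 * ℏ)) • H) * D = (s / 2) • S := by
    rw [mul_smul_comm, smul_mul_assoc, smul_smul]
    congr 1
    ring
  rw [posDef_fromBlocks_self_iff, sub_eq_add_neg, ← neg_smul, neg_neg, ← neg_div,
    posDef_diagonal_add_iff hd, posDef_diagonal_add_iff hd, hscale, hscale,
    hS.posDef_one_add_smul_iff, hS.posDef_one_add_smul_iff, ← forall₂_and]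
  refine forall₂_congr fun μ _ => ?_
  rw [show Δt * |μ| = |Δt * μ| by rw [abs_mul, abs_of_pos hΔt], abs_lt]
  constructor <;> rintro ⟨h₁, h₂⟩ <;> constructor <;> linarith
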